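/- arXiv:1912.01829 — 2 statements merged into one kernel-verified Lean document; each statement's English description precedes it below -/
import Mathlib

section
/- For any positive integers m and n, the function [gcd(m,n)]_q · C_{m,n}(q), where C_{m,n}(q) = (1/[m+n]_q)·qbinom(m+n,n), is a polynomial in q. -/
open Polynomial

noncomputable def q : RatFunc ℚ := RatFunc.X

noncomputable def qint (t : RatFunc ℚ) (k : ℕ) : RatFunc ℚ := (1 - t ^ k) / (1 - t)

noncomputable def qfact (t : RatFunc ℚ) : ℕ → RatFunc ℚ
  | 0 => 1
  | k + 1 => qint t (k + 1) * qfact t k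

noncomputable def qbinom (t : RatFunc ℚ) (a b : ℕ) : RatFunc ℚ :=
  qfact t a / (qfact t b * qfact t (a - b))

noncomputable def qCat (t : RatFunc ℚ) (m n : ℕ) : RatFunc ℚ :=
  (qint t (m + n))⁻¹ * qbinom t (m + n) n

-- basics
lemma q_eq : q = algebraMap (Polynomial ℚ) (RatFunc ℚ) X := by
  simp [q, RatFunc.algebraMap_X]

lemma one_sub_q_pow_ne (k : ℕ) (hk : 0 < k) : (1 : RatFunc ℚ) - q ^ k ≠ 0 := by
  have h : (1 : RatFunc ℚ) - q ^ k = algebraMap (Polynomial ℚ) (RatFunc ℚ) (1 - X ^ k) := by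
    simp [q_eq, map_sub, map_pow]
  rw [h]
  intro hc
  have h0 : (1 - X ^ k : Polynomial ℚ) = 0 :=
    RatFunc.algebraMap_injective ℚ (by simpa using hc)
  have := congrArg (Polynomial.eval 0) h0
  simp [zero_pow hk.ne'] at this

lemma one_sub_q_ne : (1 : RatFunc ℚ) - q ≠ 0 := by
  simpa using one_sub_q_pow_ne 1 one_pos

lemma qint_ne (k : ℕ) (hk : 0 < k) : qint q k ≠ 0 :=
  div_ne_zero (one_sub_q_pow_ne k hk) one_sub_q_ne

lemma qfact_ne (k : ℕ) : qfact q k ≠ 0 := by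
  induction k with
  | zero => simp [qfact]
  | succ k ih => exact mul_ne_zero (qint_ne _ k.succ_pos) ih

lemma qfact_succ (k : ℕ) : qfact q (k + 1) = qint q (k + 1) * qfact q k := rfl

-- the subring of polynomials
noncomputable def S : Subring (RatFunc ℚ) := (algebraMap (Polynomial ℚ) (RatFunc ℚ)).range

lemma q_mem : q ∈ S := ⟨X, q_eq.symm⟩

lemma qint_eq_geom (k : ℕ) : qint q k = ∑ i ∈ Finset.range k, q ^ i := by
  rw [qint, div_eq_iff one_sub_q_ne]
  have := geom_sum_mul q k
  linear_combination this

lemma qint_mem (k : ℕ) : qint q k ∈ S := by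
  rw [qint_eq_geom]
  exact Subring.sum_mem S fun i _ => Subring.pow_mem S q_mem i

-- Pascal
lemma qint_add (a b : ℕ) : qint q (a + b) = qint q a + q ^ a * qint q b := by
  rw [qint, qint, qint, pow_add]
  field_simp
  ring

lemma qbinom_pascal (a b : ℕ) (hb : b < a) :
    qbinom q (a + 1) (b + 1) = qbinom q a b + q ^ (b + 1) * qbinom q a (b + 1) := by
  obtain ⟨c, rfl⟩ : ∃ c, a = b + 1 + c := ⟨a - b - 1, by omega⟩
  have h1 : b + 1 + c + 1 - (b + 1) = c + 1 := by omega
  have h2 : b + 1 + c - b = c + 1 := by omega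
  have h3 : b + 1 + c - (b + 1) = c := by omega
  rw [qbinom, qbinom, qbinom, h1, h2, h3]
  rw [show b + 1 + c + 1 = (b + 1 + c) + 1 by omega, qfact_succ, qfact_succ c, qfact_succ b]
  have key : qint q (b + 1 + c + 1) = qint q (b + 1) + q ^ (b + 1) * qint q (c + 1) := by
    have := qint_add (b + 1) (c + 1)
    rw [show b + 1 + (c + 1) = b + 1 + c + 1 by omega] at this
    exact this
  have hne1 := qint_ne (b + 1) b.succ_pos
  have hne2 := qint_ne (c + 1) c.succ_pos
  have hf1 := qfact_ne b
  have hf2 := qfact_ne c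
  have hf3 := qfact_ne (b + 1 + c)
  field_simp
  rw [key]
  ring

lemma qbinom_self (a : ℕ) : qbinom q a a = 1 := by
  rw [qbinom, Nat.sub_self]
  simp [qfact, div_self (qfact_ne a)]

lemma qbinom_zero (a : ℕ) : qbinom q a 0 = 1 := by
  rw [qbinom]
  simp [qfact, div_self (qfact_ne a)]

lemma qbinom_mem (a : ℕ) : ∀ b ≤ a, qbinom q a b ∈ S := by
  induction a with
  | zero =>
    intro b hb
    interval_cases b
    simpa [qbinom_zero] using Subring.one_mem S
  | succ a ih =>
    intro b hb
    match b with
    | 0 => simpa [qbinom_zero] using Subring.one_mem S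
    | b + 1 =>
      rcases lt_or_eq_of_le (Nat.lt_succ_iff.mp hb) with h | h
      · rw [qbinom_pascal a b h]
        exact Subring.add_mem S (ih b (by omega))
          (Subring.mul_mem S (Subring.pow_mem S q_mem _) (ih (b + 1) (by omega)))
      · subst h
        simpa [qbinom_self] using Subring.one_mem S

-- key identities
lemma qint_mul_qCat_left (m n : ℕ) (hm : 0 < m) (hn : 0 < n) :
    qint q m * qCat q m n = qbinom q (m + n - 1) (m - 1) := by
  obtain ⟨m', rfl⟩ : ∃ m', m = m' + 1 := ⟨m - 1, by omega⟩
  have h1 : m' + 1 + n - 1 = m' + n := by omega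
  rw [qCat, qbinom, qbinom, h1, show m' + 1 - 1 = m' from rfl,
    show m' + n - m' = n by omega, show m' + 1 + n - n = m' + 1 by omega,
    show m' + 1 + n = (m' + n) + 1 by omega, qfact_succ, qfact_succ m']
  have hne1 := qint_ne (m' + n + 1) (by omega)
  have hne2 := qint_ne (m' + 1) (by omega)
  have hf1 := qfact_ne (m' + n)
  have hf2 := qfact_ne n
  have hf3 := qfact_ne m'
  field_simp

lemma qint_mul_qCat_right (m n : ℕ) (hm : 0 < m) (hn : 0 < n) :
    qint q n * qCat q m n = qbinom q (m + n - 1) (n - 1) := by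
  obtain ⟨n', rfl⟩ : ∃ n', n = n' + 1 := ⟨n - 1, by omega⟩
  rw [qCat, qbinom, qbinom, show m + (n' + 1) - 1 = m + n' by omega,
    show n' + 1 - 1 = n' from rfl, show m + n' - n' = m by omega,
    show m + (n' + 1) - (n' + 1) = m by omega,
    show m + (n' + 1) = (m + n') + 1 by omega, qfact_succ, qfact_succ n']
  have hne1 := qint_ne (m + n' + 1) (by omega)
  have hne2 := qint_ne (n' + 1) (by omega)
  have hf1 := qfact_ne (m + n')
  have hf2 := qfact_ne n'
  have hf3 := qfact_ne m
  field_simp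

-- Bezout in ℕ
lemma nat_bezout (m n : ℕ) (hm : 0 < m) (hn : 0 < n) :
    ∃ u v : ℕ, u * m = Nat.gcd m n + v * n := by
  have h := Nat.gcd_eq_gcd_ab m n
  set a := Nat.gcdA m n with ha_def
  set b := Nat.gcdB m n with hb_def
  have hA : -((a.natAbs : ℤ)) ≤ a ∧ a ≤ (a.natAbs : ℤ) := by
    rcases Int.natAbs_eq a with h' | h' <;> omega
  have hB : -((b.natAbs : ℤ)) ≤ b ∧ b ≤ (b.natAbs : ℤ) := by
    rcases Int.natAbs_eq b with h' | h' <;> omega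
  set t : ℤ := (a.natAbs : ℤ) + (b.natAbs : ℤ) with ht_def
  have hn1 : (1 : ℤ) ≤ (n : ℤ) := by exact_mod_cast hn
  have hm1 : (1 : ℤ) ≤ (m : ℤ) := by exact_mod_cast hm
  have ha : (0 : ℤ) ≤ a + t * n := by nlinarith [hA.1, hA.2, hB.1, hB.2]
  have hb : (0 : ℤ) ≤ t * m - b := by nlinarith [hA.1, hA.2, hB.1, hB.2]
  refine ⟨(a + t * n).toNat, (t * m - b).toNat, ?_⟩
  zify
  rw [Int.toNat_of_nonneg ha, Int.toNat_of_nonneg hb]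
  linear_combination -h

-- combination
lemma qint_gcd_comb (m n : ℕ) (hm : 0 < m) (hn : 0 < n) :
    ∃ A B : RatFunc ℚ, A ∈ S ∧ B ∈ S ∧
      qint q (Nat.gcd m n) = A * qint q m + B * qint q n := by
  obtain ⟨u, v, huv⟩ := nat_bezout m n hm hn
  refine ⟨∑ i ∈ Finset.range u, (q ^ m) ^ i,
          -q ^ (Nat.gcd m n) * ∑ i ∈ Finset.range v, (q ^ n) ^ i, ?_, ?_, ?_⟩
  · exact Subring.sum_mem S fun i _ => Subring.pow_mem S (Subring.pow_mem S q_mem m) i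
  · exact Subring.mul_mem S (Subring.neg_mem S (Subring.pow_mem S q_mem _))
      (Subring.sum_mem S fun i _ => Subring.pow_mem S (Subring.pow_mem S q_mem n) i)
  · have g1 := geom_sum_mul (q ^ m) u
    have g2 := geom_sum_mul (q ^ n) v
    rw [← pow_mul, mul_comm m u] at g1
    rw [← pow_mul, mul_comm n v] at g2
    have hq : q ^ (u * m) = q ^ (Nat.gcd m n) * q ^ (v * n) := by
      rw [← pow_add, huv]
    have main : (1 - q ^ Nat.gcd m n)
        = (∑ i ∈ Finset.range u, (q ^ m) ^ i) * (1 - q ^ m)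
          + (-q ^ (Nat.gcd m n) * ∑ i ∈ Finset.range v, (q ^ n) ^ i) * (1 - q ^ n) := by
      linear_combination g1 - q ^ (Nat.gcd m n) * g2 + hq
    rw [qint, qint, qint, main]
    ring

theorem stmt_2 (m n : ℕ) (hm : 0 < m) (hn : 0 < n) :
    ∃ P : Polynomial ℚ,
      algebraMap (Polynomial ℚ) (RatFunc ℚ) P = qint q (Nat.gcd m n) * qCat q m n := by
  obtain ⟨A, B, hA, hB, hcomb⟩ := qint_gcd_comb m n hm hn
  have key : qint q (Nat.gcd m n) * qCat q m n
      = A * qbinom q (m + n - 1) (m - 1) + B * qbinom q (m + n - 1) (n - 1) := by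
    rw [← qint_mul_qCat_left m n hm hn, ← qint_mul_qCat_right m n hm hn, hcomb]
    ring
  have hmem : qint q (Nat.gcd m n) * qCat q m n ∈ S := by
    rw [key]
    exact Subring.add_mem S
      (Subring.mul_mem S hA (qbinom_mem _ _ (by omega)))
      (Subring.mul_mem S hB (qbinom_mem _ _ (by omega)))
  exact hmem
end

section
/- For every nonnegative integer k, (q^2-1)·C_{3,3k+2}(q) = (q^{3k+4}-1)·∑_{i=0}^{k} q^{3i} as polynomials in q, where C_{3,n}(q) = (1/[n+3]_q)·qbinom(n+3,n). -/
open Polynomial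

lemma q_pow_ne_one (k : ℕ) (hk : k ≠ 0) : q ^ k ≠ 1 := by
  intro h
  have : (algebraMap ℚ[X] (RatFunc ℚ)) (X ^ k) = algebraMap ℚ[X] (RatFunc ℚ) 1 := by
    simpa [q, map_pow, RatFunc.algebraMap_X] using h
  have hx : (X : ℚ[X]) ^ k = 1 := RatFunc.algebraMap_injective ℚ this
  have := congrArg Polynomial.natDegree hx
  simp [Polynomial.natDegree_X_pow] at this
  exact hk this

lemma one_sub_q_pow_ne_zero (k : ℕ) (hk : k ≠ 0) : (1 : RatFunc ℚ) - q ^ k ≠ 0 := by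
  intro h
  exact q_pow_ne_one k hk (by linear_combination -h)

lemma qint_ne_zero (k : ℕ) (hk : k ≠ 0) : qint q k ≠ 0 :=
  div_ne_zero (one_sub_q_pow_ne_zero k hk) (by simpa using one_sub_q_pow_ne_zero 1 one_ne_zero)

lemma qfact_ne_zero (n : ℕ) : qfact q n ≠ 0 := by
  induction n with
  | zero => simp [qfact]
  | succ m ih => exact mul_ne_zero (qint_ne_zero (m+1) (Nat.succ_ne_zero m)) ih

set_option maxHeartbeats 1600000 in
theorem stmt_7 (k : ℕ) :
    (q ^ 2 - 1) * qCat q 3 (3 * k + 2)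
      = (q ^ (3 * k + 4) - 1) * ∑ i ∈ Finset.range (k + 1), q ^ (3 * i) := by
  have hsum : ∑ i ∈ Finset.range (k + 1), q ^ (3 * i)
      = (q ^ (3 * (k+1)) - 1) / (q ^ 3 - 1) := by
    rw [pow_mul]
    rw [← geom_sum_eq (by simpa using q_pow_ne_one 3 (by norm_num)) (k+1)]
    exact Finset.sum_congr rfl fun i _ => pow_mul q 3 i
  have h1 := one_sub_q_pow_ne_zero 1 one_ne_zero
  have h2 := one_sub_q_pow_ne_zero 2 two_ne_zero
  have h3 := one_sub_q_pow_ne_zero 3 (by norm_num)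
  have h33 := one_sub_q_pow_ne_zero (3*k+3) (by omega)
  have h34 := one_sub_q_pow_ne_zero (3*k+4) (by omega)
  have h35 := one_sub_q_pow_ne_zero (3*k+5) (by omega)
  have hF := qfact_ne_zero (3*k+2)
  have h3' : (q:RatFunc ℚ)^3 - 1 ≠ 0 := by intro h; exact h3 (by linear_combination -h)
  have hmn : 3 + (3*k+2) = 3*k+5 := by omega
  have hsub : (3*k+5) - (3*k+2) = 3 := by omega
  have hqCat : qCat q 3 (3*k+2)
      = qint q (3*k+4) * qint q (3*k+3) / (qint q 3 * qint q 2 * qint q 1) := by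
    rw [qCat, qbinom, hmn, hsub]
    rw [show qfact q (3*k+5)
        = qint q (3*k+5) * (qint q (3*k+4) * (qint q (3*k+3) * qfact q (3*k+2))) from rfl]
    rw [show qfact q 3 = qint q 3 * (qint q 2 * (qint q 1 * 1)) from rfl]
    have hI5 := qint_ne_zero (3*k+5) (by omega)
    have hJ3 := qint_ne_zero 3 (by omega)
    have hJ2 := qint_ne_zero 2 (by omega)
    have hJ1 := qint_ne_zero 1 (by omega)
    have hI4 := qint_ne_zero (3*k+4) (by omega)
    have hI3 := qint_ne_zero (3*k+3) (by omega)
    field_simp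
  rw [show 3*k+4 = 3*k+2+2 by ring, hqCat, hsum]
  have hI4 := qint_ne_zero (3*k+4) (by omega)
  have hI3 := qint_ne_zero (3*k+3) (by omega)
  have hJ3 := qint_ne_zero 3 (by omega)
  have hJ2 := qint_ne_zero 2 (by omega)
  have hJ1 := qint_ne_zero 1 (by omega)
  have hq : (1:RatFunc ℚ) - q ≠ 0 := by simpa using h1
  simp only [qint, pow_one]
  rw [div_mul_div_comm, div_mul_div_comm, div_self hq, mul_one]
  field_simp
  ring
end
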